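/- arXiv:1401.5446 — 3 statements merged into one kernel-verified Lean document; each statement's English description precedes it below -/
import Mathlib

section
/- For every real c > 0 and all complex numbers μ and λ with Re μ < 0 < Re λ, one has (1/(2π)) ∫_{−∞}^{∞} e^{icy} / ((μ − iy)(iy − λ)) dy = e^{μc}/(λ − μ); equivalently, the integral of e^{ζc} dζ/(2πi (μ − ζ)(ζ − λ)) along the upward-oriented imaginary axis equals e^{μc}/(λ − μ). -/
/-! The integrand is, after the substitution `y = 2πξ` and up to the factor `λ - μ`, the Fourier
transform of the two-sided exponential `h(t) = e^{λt}` for `t ≤ 0`, `e^{μt}` for `t > 0`. Both `h`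
and its transform (which decays like `1/y²`) are integrable and `h` is continuous, so Fourier
inversion at `t = c > 0` gives back `h(c) = e^{μc}`. -/

open MeasureTheory Complex Real Set Filter FourierTransform

noncomputable def twoSidedExp (mu lam : ℂ) (t : ℝ) : ℂ :=
  if t ≤ 0 then cexp (lam * t) else cexp (mu * t)

lemma twoSidedExp_of_nonpos (mu lam : ℂ) {t : ℝ} (ht : t ≤ 0) :
    twoSidedExp mu lam t = cexp (lam * t) :=
  if_pos ht

lemma twoSidedExp_of_pos (mu lam : ℂ) {t : ℝ} (ht : 0 < t) :
    twoSidedExp mu lam t = cexp (mu * t) :=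
  if_neg ht.not_ge

lemma continuous_twoSidedExp (mu lam : ℂ) : Continuous (twoSidedExp mu lam) :=
  Continuous.if_le (by fun_prop) (by fun_prop) continuous_id continuous_const
    fun t ht => by simp [ht]

lemma cexp_mul_twoSidedExp (z mu lam : ℂ) (t : ℝ) :
    cexp (z * t) * twoSidedExp mu lam t = twoSidedExp (mu + z) (lam + z) t := by
  unfold twoSidedExp
  split_ifs <;> rw [← Complex.exp_add] <;> ring_nf

section

variable {mu lam : ℂ}

lemma integrableOn_twoSidedExp_Iic (hlam : 0 < lam.re) :
    IntegrableOn (twoSidedExp mu lam) (Iic 0) :=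
  (integrableOn_exp_mul_complex_Iic hlam 0).congr_fun
    (fun _ ht => (twoSidedExp_of_nonpos mu lam ht).symm) measurableSet_Iic

lemma integrableOn_twoSidedExp_Ioi (hmu : mu.re < 0) :
    IntegrableOn (twoSidedExp mu lam) (Ioi 0) :=
  (integrableOn_exp_mul_complex_Ioi hmu 0).congr_fun
    (fun _ ht => (twoSidedExp_of_pos mu lam ht).symm) measurableSet_Ioi

lemma integrable_twoSidedExp (hmu : mu.re < 0) (hlam : 0 < lam.re) :
    Integrable (twoSidedExp mu lam) := by
  rw [← integrableOn_univ, ← Iic_union_Ioi (a := 0)]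
  exact (integrableOn_twoSidedExp_Iic hlam).union (integrableOn_twoSidedExp_Ioi hmu)

lemma integral_twoSidedExp (hmu : mu.re < 0) (hlam : 0 < lam.re) :
    ∫ t, twoSidedExp mu lam t = lam⁻¹ - mu⁻¹ := by
  rw [← intervalIntegral.integral_Iic_add_Ioi (integrableOn_twoSidedExp_Iic hlam)
      (integrableOn_twoSidedExp_Ioi hmu),
    setIntegral_congr_fun measurableSet_Iic fun _ => twoSidedExp_of_nonpos mu lam,
    setIntegral_congr_fun measurableSet_Ioi fun _ => twoSidedExp_of_pos mu lam,
    integral_exp_mul_complex_Iic hlam, integral_exp_mul_complex_Ioi hmu]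
  simp [sub_eq_add_neg, div_eq_inv_mul]

lemma fourier_twoSidedExp (hmu : mu.re < 0) (hlam : 0 < lam.re) (ξ : ℝ) :
    𝓕 (twoSidedExp mu lam) ξ =
      (lam - mu) * ((mu - I * ↑(2 * π * ξ)) * (I * ↑(2 * π * ξ) - lam))⁻¹ := by
  have hω : ∀ v : ℝ, cexp (↑(-2 * π * v * ξ) * I) = cexp (-(I * ↑(2 * π * ξ)) * v) :=
    fun v => by congr 1; push_cast; ring
  set ω : ℂ := I * ↑(2 * π * ξ)
  have hmuω : mu - ω ≠ 0 := fun h => hmu.ne (by simpa [ω] using congrArg re h)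
  have hlamω : lam - ω ≠ 0 := fun h => hlam.ne' (by simpa [ω] using congrArg re h)
  have hωlam : ω - lam ≠ 0 := sub_ne_zero.mpr (sub_ne_zero.mp hlamω).symm
  simp_rw [fourier_real_eq_integral_exp_smul, smul_eq_mul, hω, cexp_mul_twoSidedExp]
  rw [integral_twoSidedExp (by simpa [ω] using hmu) (by simpa [ω] using hlam),
    show lam + -ω = lam - ω by ring, show mu + -ω = mu - ω by ring]
  field_simp
  ring

end

lemma one_add_abs_le_mul_norm_sub_I_mul {z : ℂ} (hz : z.re ≠ 0) (y : ℝ) :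
    1 + |y| ≤ (1 + (1 + ‖z‖) / |z.re|) * ‖z - I * y‖ := by
  have hre : |z.re| ≤ ‖z - I * y‖ := by simpa using abs_re_le_norm (z - I * y)
  have hy : |y| ≤ ‖z‖ + ‖z - I * y‖ := by
    simpa using norm_sub_le z (z - I * y)
  have hratio : 1 + ‖z‖ ≤ (1 + ‖z‖) / |z.re| * ‖z - I * y‖ := by
    rw [div_mul_eq_mul_div, le_div_iff₀ (abs_pos.mpr hz)]
    gcongr
  linarith

lemma integrable_inv_mul_sub_I_mul {mu lam : ℂ} (hmu : mu.re ≠ 0) (hlam : lam.re ≠ 0) :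
    Integrable fun y : ℝ => ((mu - I * y) * (I * y - lam))⁻¹ := by
  refine (integrable_inv_one_add_sq.const_mul
    ((1 + (1 + ‖mu‖) / |mu.re|) * (1 + (1 + ‖lam‖) / |lam.re|))).mono' (by fun_prop)
    (Eventually.of_forall fun y => ?_)
  have hmu_y := one_add_abs_le_mul_norm_sub_I_mul hmu y
  have hlam_y := one_add_abs_le_mul_norm_sub_I_mul hlam y
  rw [norm_sub_rev] at hlam_y
  set Cmu := 1 + (1 + ‖mu‖) / |mu.re|
  set Clam := 1 + (1 + ‖lam‖) / |lam.re|
  have hsq : 1 + y ^ 2 ≤ Cmu * Clam * (‖mu - I * y‖ * ‖I * y - lam‖) := by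
    nlinarith [abs_nonneg y, sq_abs y]
  have hpos : 0 < ‖mu - I * y‖ * ‖I * y - lam‖ := by
    refine (by positivity : (0 : ℝ) ≤ _).lt_of_ne' fun h => ?_
    rw [h, mul_zero] at hsq
    nlinarith [sq_nonneg y]
  rw [norm_inv, norm_mul, ← div_eq_mul_inv, le_div_iff₀ (by positivity), inv_mul_le_iff₀ hpos]
  linarith

lemma fourierInv_comp_two_pi_mul (F : ℝ → ℂ) (x : ℝ) :
    𝓕⁻ (fun ξ : ℝ => F (2 * π * ξ)) x = (2 * π : ℂ)⁻¹ * ∫ y : ℝ, cexp (I * x * y) * F y := by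
  have h := Measure.integral_comp_mul_left (fun y : ℝ => cexp (I * x * y) * F y) (2 * π)
  rw [abs_of_pos (by positivity), Complex.real_smul] at h
  push_cast at h
  rw [fourierInv_eq', ← h]
  push_cast
  simp_rw [smul_eq_mul, Real.inner_apply]
  congr 1 with ξ
  push_cast
  ring_nf

/-- For `c > 0` and `Re μ < 0 < Re λ`, the integral of `e^{ζc} dζ/(2πi (μ − ζ)(ζ − λ))`
along the upward-oriented imaginary axis equals `e^{μc}/(λ − μ)`. -/
theorem imaginary_axis_exp_residue (c : ℝ) (hc : 0 < c) (mu lam : ℂ)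
    (hmu : mu.re < 0) (hlam : 0 < lam.re) :
    (1 / (2 * (Real.pi : ℂ))) *
        ∫ y : ℝ, Complex.exp (Complex.I * c * y) /
          ((mu - Complex.I * y) * (Complex.I * y - lam)) =
      Complex.exp (mu * c) / (lam - mu) := by
  set R : ℝ → ℂ := fun y => (lam - mu) * ((mu - I * y) * (I * y - lam))⁻¹
  have hF : 𝓕 (twoSidedExp mu lam) = fun ξ => R (2 * π * ξ) :=
    funext (fourier_twoSidedExp hmu hlam)
  have hFint : Integrable (𝓕 (twoSidedExp mu lam)) := by
    rw [hF]
    exact ((integrable_inv_mul_sub_I_mul hmu.ne hlam.ne').comp_mul_left'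
      (by positivity)).const_mul _
  have hinv := congrFun ((continuous_twoSidedExp mu lam).fourierInv_fourier_eq
    (integrable_twoSidedExp hmu hlam) hFint) c
  rw [hF, fourierInv_comp_two_pi_mul, twoSidedExp_of_pos mu lam hc] at hinv
  have hR : ∀ y : ℝ, cexp (I * c * y) * R y =
      (lam - mu) * (cexp (I * c * y) / ((mu - I * y) * (I * y - lam))) := fun y => by
    simp only [R]; ring
  simp_rw [hR, integral_const_mul] at hinv
  have hlm : lam - mu ≠ 0 := sub_ne_zero.mpr fun h => by linarith [congrArg re h]
  rw [← hinv]
  field_simp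
end

section
/- For all complex numbers λ₁ and λ₂ with Re λ₁ > 0, Re λ₂ > 0 and λ₁ ≠ λ₂, and every real c, the integral of e^{ζc} dζ/(2πi (λ₂ − ζ)(ζ − λ₁)) along the upward-oriented imaginary axis, i.e. (1/(2π)) ∫_{−∞}^{∞} e^{icy} / ((λ₂ − iy)(iy − λ₁)) dy, equals (e^{λ₂ c} − e^{λ₁ c})/(λ₂ − λ₁) if c < 0, and equals 0 if c ≥ 0. -/
/-!
Let `h` be the convolution of the one-sided exponentials `e^{-λ₁t}·1_{t>0}` and `e^{-λ₂t}·1_{t>0}`,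
i.e. `h(x) = (e^{-λ₁x} − e^{-λ₂x})/(λ₂ − λ₁)` for `x > 0` and `h(x) = 0` for `x ≤ 0`. It is
continuous and integrable, and its Fourier transform `1/((λ₁ + 2πiξ)(λ₂ + 2πiξ))` is integrable
because it decays like `ξ⁻²`. Fourier inversion at `x = −c`, after the substitution `y = −2πξ`,
identifies the integral with `−h(−c)`.
-/

open MeasureTheory Complex Set
open scoped Real FourierTransform

lemma integral_Ioi_cexp_neg_mul_sub {a b : ℂ} (ha : 0 < a.re) (hb : 0 < b.re) :
    ∫ x : ℝ in Ioi 0, (cexp (-a * x) - cexp (-b * x)) = a⁻¹ - b⁻¹ := by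
  have ha' : (-a).re < 0 := by simpa using ha
  have hb' : (-b).re < 0 := by simpa using hb
  rw [integral_sub (integrableOn_exp_mul_complex_Ioi ha' 0)
      (integrableOn_exp_mul_complex_Ioi hb' 0),
    integral_exp_mul_complex_Ioi ha' 0, integral_exp_mul_complex_Ioi hb' 0]
  simp

lemma add_ofReal_mul_I_ne_zero {a : ℂ} (ha : a.re ≠ 0) (t : ℝ) : a + t * I ≠ 0 :=
  fun h => ha (by simpa using congrArg re h)

lemma integrable_inv_norm_add_mul_I_sq {a : ℂ} (ha : a.re ≠ 0) :
    Integrable fun t : ℝ => (‖a + t * I‖ ^ 2)⁻¹ := by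
  have hnorm (t : ℝ) :
      (‖a + t * I‖ ^ 2)⁻¹ = (a.re ^ 2)⁻¹ * (1 + ((t + a.im) / a.re) ^ 2)⁻¹ := by
    rw [Complex.sq_norm, Complex.normSq_apply, ← mul_inv]
    congr 1
    simp only [add_re, add_im, mul_I_re, mul_I_im, ofReal_re, ofReal_im]
    field_simp
    ring
  simp_rw [hnorm]
  exact ((integrable_inv_one_add_sq.comp_div ha).comp_add_right a.im).const_mul _

lemma integrable_inv_mul_add_mul_I {a b : ℂ} (ha : a.re ≠ 0) (hb : b.re ≠ 0) :
    Integrable fun t : ℝ => ((a + t * I) * (b + t * I))⁻¹ := by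
  refine ((integrable_inv_norm_add_mul_I_sq ha).add (integrable_inv_norm_add_mul_I_sq hb)).mono'
    (by fun_prop) (Filter.Eventually.of_forall fun t => ?_)
  rw [Pi.add_apply, norm_inv, norm_mul, mul_inv, ← inv_pow, ← inv_pow]
  nlinarith [two_mul_le_add_sq ‖a + t * I‖⁻¹ ‖b + t * I‖⁻¹,
    inv_nonneg.2 (norm_nonneg (a + t * I)), inv_nonneg.2 (norm_nonneg (b + t * I))]

/-- Written with `max x 0` rather than as an indicator so that continuity is evident. -/
noncomputable def oneSidedExpConv (l₁ l₂ : ℂ) (x : ℝ) : ℂ :=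
  (cexp (-l₁ * ↑(max x 0)) - cexp (-l₂ * ↑(max x 0))) / (l₂ - l₁)

namespace oneSidedExpConv

variable {l₁ l₂ : ℂ}

lemma continuous : Continuous (oneSidedExpConv l₁ l₂) := by
  unfold oneSidedExpConv
  fun_prop

lemma eq_indicator : oneSidedExpConv l₁ l₂ =
    (Ioi 0).indicator fun x : ℝ => (cexp (-l₁ * x) - cexp (-l₂ * x)) / (l₂ - l₁) := by
  ext x
  rcases lt_or_ge 0 x with hx | hx
  · simp [oneSidedExpConv, hx, hx.le]
  · simp [oneSidedExpConv, hx, not_lt.2 hx]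

lemma neg_apply_neg (c : ℝ) : -oneSidedExpConv l₁ l₂ (-c) =
    if c < 0 then (cexp (l₂ * c) - cexp (l₁ * c)) / (l₂ - l₁) else 0 := by
  rw [eq_indicator, indicator_apply]
  simp only [mem_Ioi, neg_pos]
  split_ifs
  · rw [ofReal_neg, neg_mul_neg, neg_mul_neg, ← neg_div, neg_sub]
  · exact neg_zero

lemma integrable (h₁ : 0 < l₁.re) (h₂ : 0 < l₂.re) : Integrable (oneSidedExpConv l₁ l₂) := by
  rw [eq_indicator, integrable_indicator_iff measurableSet_Ioi]
  exact ((integrableOn_exp_mul_complex_Ioi (by simpa) 0).sub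
    (integrableOn_exp_mul_complex_Ioi (by simpa) 0)).div_const _

lemma fourier_eq (h₁ : 0 < l₁.re) (h₂ : 0 < l₂.re) (hne : l₁ ≠ l₂) (ξ : ℝ) :
    𝓕 (oneSidedExpConv l₁ l₂) ξ = ((l₁ + ↑(2 * π * ξ) * I) * (l₂ + ↑(2 * π * ξ) * I))⁻¹ := by
  have hexp (l : ℂ) (x : ℝ) : cexp (↑(-2 * π * x * ξ) * I) * cexp (-l * x)
      = cexp (-(l + ↑(2 * π * ξ) * I) * x) := by
    rw [← Complex.exp_add]
    congr 1
    push_cast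
    ring
  rw [Real.fourier_real_eq_integral_exp_smul, eq_indicator, ← indicator_smul,
    integral_indicator measurableSet_Ioi]
  simp_rw [smul_eq_mul, mul_div_assoc', mul_sub, hexp]
  rw [integral_div, integral_Ioi_cexp_neg_mul_sub (by simpa) (by simpa)]
  have hA := add_ofReal_mul_I_ne_zero h₁.ne' (2 * π * ξ)
  have hB := add_ofReal_mul_I_ne_zero h₂.ne' (2 * π * ξ)
  have hl : l₂ - l₁ ≠ 0 := sub_ne_zero.2 hne.symm
  field_simp
  ring

lemma integrable_fourier (h₁ : 0 < l₁.re) (h₂ : 0 < l₂.re) (hne : l₁ ≠ l₂) :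
    Integrable (𝓕 (oneSidedExpConv l₁ l₂)) := by
  refine ((integrable_inv_mul_add_mul_I h₁.ne' h₂.ne').comp_mul_left' (R := 2 * π)
    (by positivity)).congr (Filter.Eventually.of_forall fun ξ => ?_)
  simp only [fourier_eq h₁ h₂ hne]

lemma integral_cexp_mul_fourier (h₁ : 0 < l₁.re) (h₂ : 0 < l₂.re) (hne : l₁ ≠ l₂) (x : ℝ) :
    ∫ ξ : ℝ, cexp (↑(2 * π * (ξ * x)) * I) *
        ((l₁ + ↑(2 * π * ξ) * I) * (l₂ + ↑(2 * π * ξ) * I))⁻¹ = oneSidedExpConv l₁ l₂ x := by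
  rw [← (integrable h₁ h₂).fourierInv_fourier_eq (integrable_fourier h₁ h₂ hne)
    continuous.continuousAt, Real.fourierInv_eq']
  simp_rw [fourier_eq h₁ h₂ hne, smul_eq_mul, Real.inner_apply]

end oneSidedExpConv

/-- For `Re λ₁ > 0`, `Re λ₂ > 0`, `λ₁ ≠ λ₂` and `c` real, the integral of
`e^{ζc} dζ/(2πi (λ₂ − ζ)(ζ − λ₁))` along the upward-oriented imaginary axis equals
`(e^{λ₂c} − e^{λ₁c})/(λ₂ − λ₁)` if `c < 0` and `0` if `c ≥ 0`. -/
theorem imaginary_axis_exp_residue_same_side (lam₁ lam₂ : ℂ)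
    (h₁ : 0 < lam₁.re) (h₂ : 0 < lam₂.re) (hne : lam₁ ≠ lam₂) (c : ℝ) :
    (1 / (2 * (Real.pi : ℂ))) *
        ∫ y : ℝ, Complex.exp (Complex.I * c * y) /
          ((lam₂ - Complex.I * y) * (Complex.I * y - lam₁)) =
      if c < 0 then (Complex.exp (lam₂ * c) - Complex.exp (lam₁ * c)) / (lam₂ - lam₁)
      else 0 := by
  have hsubst (ξ : ℝ) : cexp (I * c * ↑(-2 * π * ξ)) /
      ((lam₂ - I * ↑(-2 * π * ξ)) * (I * ↑(-2 * π * ξ) - lam₁))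
      = -(cexp (↑(2 * π * (ξ * -c)) * I) *
        ((lam₁ + ↑(2 * π * ξ) * I) * (lam₂ + ↑(2 * π * ξ) * I))⁻¹) := by
    rw [show I * c * ↑(-2 * π * ξ) = ↑(2 * π * (ξ * -c)) * I by push_cast; ring,
      show (lam₂ - I * ↑(-2 * π * ξ)) * (I * ↑(-2 * π * ξ) - lam₁)
        = -((lam₁ + ↑(2 * π * ξ) * I) * (lam₂ + ↑(2 * π * ξ) * I)) by push_cast; ring,
      div_neg, div_eq_mul_inv]
  have hscale := Measure.integral_comp_mul_left
    (fun y : ℝ => cexp (I * c * y) / ((lam₂ - I * y) * (I * y - lam₁))) (-2 * π)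
  simp only [hsubst, integral_neg, oneSidedExpConv.integral_cexp_mul_fourier h₁ h₂ hne]
    at hscale
  rw [← oneSidedExpConv.neg_apply_neg, hscale, abs_of_neg (by simp [Real.pi_pos]),
    Complex.real_smul]
  push_cast
  ring
end

section
/- There is a constant C > 0 such that for every p ≥ 1 and every σ ≥ 0, with Θ_{σ̃}(λ) := λ³/3 − 2^{2/3} σ λ and λ(u) := 2^{1/3}√σ + e^{iπ/3} u, one has ∫_0^∞ |exp( Θ_{σ̃}(λ(u)) )|^p du ≤ C e^{−(4/3) p σ^{3/2}}, and moreover sup_{u ≥ 0} |exp( Θ_{σ̃}(λ(u)) )| = e^{−(4/3) σ^{3/2}}. In particular the jump of the tacnode Riemann–Hilbert problem on the contour R₁ is exponentially suppressed in every L^p norm, 1 ≤ p ≤ ∞, as σ → +∞. -/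
open MeasureTheory Set Complex

/-- The phase `Θ_{σ̃}(λ) := λ³/3 − 2^{2/3}σλ` (with `σ̃ = 2^{2/3}σ`). -/
noncomputable def ThetaSigma (σ : ℝ) (l : ℂ) : ℂ :=
  l ^ 3 / 3 - ((2 : ℝ) ^ ((2 : ℝ) / 3) * σ : ℝ) * l

/-- The parametrization `λ(u) = 2^{1/3}√σ + e^{iπ/3}u` of one branch of the contour `R₁`
through the critical point `2^{1/3}√σ` of `Θ_{σ̃}`. -/
noncomputable def lamR1 (σ u : ℝ) : ℂ :=
  ((2 : ℝ) ^ ((1 : ℝ) / 3) * Real.sqrt σ : ℝ) + Complex.exp (Real.pi / 3 * Complex.I) * u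

/-!
Write `a = 2^{1/3}√σ`, so that `a² = 2^{2/3}σ` and `a` is the critical point of `Θ_{σ̃}`.
Since `ω = e^{iπ/3}` satisfies `ω² = ω − 1`, expanding the cube gives
`Θ_{σ̃}(a + ωu) = −(2/3)a³ + (ω − 1)a u² − u³/3`, whose real part is
`−(4/3)σ^{3/2} − a u²/2 − u³/3`. For `u ≥ 0` the last two terms are `≤ 0`, which gives the
supremum, and for `p ≥ 1` the `p`-th power of the modulus is dominated by
`e^{−(4/3)pσ^{3/2}} e^{1/3 − u/3}`, which gives the integral bound.
-/

lemma cube_div_three_sub_sq_mul_of_sq_eq {ω : ℂ} (hω : ω ^ 2 = ω - 1) (a u : ℂ) :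
    (a + ω * u) ^ 3 / 3 - a ^ 2 * (a + ω * u) =
      -(2 / 3) * a ^ 3 + (ω - 1) * a * u ^ 2 - u ^ 3 / 3 := by
  linear_combination (a * u ^ 2 + (ω + 1) * u ^ 3 / 3) * hω

lemma exp_pi_div_three_mul_I_sq :
    cexp (Real.pi / 3 * I) ^ 2 = cexp (Real.pi / 3 * I) - 1 := by
  have h3 : ((Real.sqrt 3 : ℝ) : ℂ) ^ 2 = 3 := by
    norm_cast; exact Real.sq_sqrt (by norm_num)
  rw [← ofReal_ofNat, ← ofReal_div, exp_ofReal_mul_I,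
    Real.cos_pi_div_three, Real.sin_pi_div_three]
  push_cast
  linear_combination I ^ 2 / 4 * h3 + (3 / 4 : ℂ) * I_sq

lemma exp_pi_div_three_mul_I_re : (cexp (Real.pi / 3 * I)).re = 1 / 2 := by
  rw [← ofReal_ofNat, ← ofReal_div, exp_ofReal_mul_I_re, Real.cos_pi_div_three]

section CriticalPoint

variable {σ : ℝ} (hσ : 0 ≤ σ)
include hσ

lemma two_rpow_one_third_mul_sqrt_sq :
    ((2 : ℝ) ^ ((1 : ℝ) / 3) * Real.sqrt σ) ^ 2 = (2 : ℝ) ^ ((2 : ℝ) / 3) * σ := by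
  rw [mul_pow, Real.sq_sqrt hσ, ← Real.rpow_natCast, ← Real.rpow_mul (by norm_num)]
  norm_num

lemma two_rpow_one_third_mul_sqrt_cube :
    ((2 : ℝ) ^ ((1 : ℝ) / 3) * Real.sqrt σ) ^ 3 = 2 * σ ^ ((3 : ℝ) / 2) := by
  rw [mul_pow, ← Real.rpow_natCast, ← Real.rpow_mul (by norm_num), Real.sqrt_eq_rpow,
    ← Real.rpow_natCast, ← Real.rpow_mul hσ]
  norm_num

lemma re_ThetaSigma_lamR1 (u : ℝ) :
    (ThetaSigma σ (lamR1 σ u)).re =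
      -(4 / 3) * σ ^ ((3 : ℝ) / 2) -
        ((2 : ℝ) ^ ((1 : ℝ) / 3) * Real.sqrt σ * u ^ 2 / 2 + u ^ 3 / 3) := by
  set a := (2 : ℝ) ^ ((1 : ℝ) / 3) * Real.sqrt σ
  rw [ThetaSigma, lamR1, ← two_rpow_one_third_mul_sqrt_sq hσ, ofReal_pow,
    cube_div_three_sub_sq_mul_of_sq_eq exp_pi_div_three_mul_I_sq]
  have hre : ((cexp (Real.pi / 3 * I) - 1) * a * u ^ 2).re = -(a * u ^ 2 / 2) := by
    rw [← ofReal_pow, mul_assoc, ← ofReal_mul, re_mul_ofReal, sub_re,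
      exp_pi_div_three_mul_I_re, one_re]
    ring
  rw [sub_re, add_re, hre]
  simp only [← ofReal_pow, ← ofReal_ofNat, ← ofReal_div, ← ofReal_neg, ← ofReal_mul, ofReal_re]
  rw [two_rpow_one_third_mul_sqrt_cube hσ]
  ring

lemma norm_exp_ThetaSigma_lamR1 (u : ℝ) :
    ‖cexp (ThetaSigma σ (lamR1 σ u))‖ =
      Real.exp (-(4 / 3) * σ ^ ((3 : ℝ) / 2) -
        ((2 : ℝ) ^ ((1 : ℝ) / 3) * Real.sqrt σ * u ^ 2 / 2 + u ^ 3 / 3)) := by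
  rw [norm_exp, re_ThetaSigma_lamR1 hσ]

end CriticalPoint

lemma cubic_phase_nonneg {b u : ℝ} (hb : 0 ≤ b) (hu : 0 ≤ u) :
    0 ≤ b * u ^ 2 / 2 + u ^ 3 / 3 := by
  positivity

lemma cubic_phase_ge_linear {b u : ℝ} (hb : 0 ≤ b) (hu : 0 ≤ u) :
    1 / 3 * u - 1 / 3 ≤ b * u ^ 2 / 2 + u ^ 3 / 3 := by
  nlinarith [mul_nonneg hb (sq_nonneg u), mul_nonneg hu (sq_nonneg (u - 1))]

lemma setIntegral_exp_neg_mul_le_of_linear_growth {φ : ℝ → ℝ} {c d p : ℝ} (hc : 0 < c)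
    (hp : 1 ≤ p) (hφ_nonneg : ∀ u > 0, 0 ≤ φ u) (hφ_growth : ∀ u > 0, c * u - d ≤ φ u) :
    ∫ u in Ioi 0, Real.exp (-(p * φ u)) ≤ Real.exp d / c := by
  have hpointwise : ∀ u > 0, Real.exp (-(p * φ u)) ≤ Real.exp d * Real.exp (-c * u) := by
    intro u hu
    rw [← Real.exp_add, Real.exp_le_exp]
    nlinarith [hφ_nonneg u hu, hφ_growth u hu]
  calc ∫ u in Ioi 0, Real.exp (-(p * φ u))
      ≤ ∫ u in Ioi 0, Real.exp d * Real.exp (-c * u) := by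
        refine integral_mono_of_nonneg (.of_forall fun _ => (Real.exp_pos _).le)
          ((integrableOn_exp_mul_Ioi (neg_lt_zero.mpr hc) 0).const_mul _) ?_
        filter_upwards [ae_restrict_mem measurableSet_Ioi] with u hu using hpointwise u hu
    _ = Real.exp d / c := by
        rw [integral_const_mul, integral_exp_mul_Ioi (neg_lt_zero.mpr hc)]
        field_simp
        simp

/-- The jump of the tacnode Riemann–Hilbert problem on the contour `R₁` is exponentially
suppressed in every `L^p` norm, `1 ≤ p ≤ ∞`, as `σ → +∞`: there is `C > 0` with
`∫₀^∞ |e^{Θ_{σ̃}(λ(u))}|^p du ≤ C e^{−(4/3)pσ^{3/2}}` for all `p ≥ 1`, `σ ≥ 0`, and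
`sup_{u ≥ 0} |e^{Θ_{σ̃}(λ(u))}| = e^{−(4/3)σ^{3/2}}`. -/
theorem jump_R1_exponentially_suppressed :
    ∃ C > (0 : ℝ), ∀ p : ℝ, 1 ≤ p → ∀ σ : ℝ, 0 ≤ σ →
      (∫ u in Ioi (0 : ℝ), ‖Complex.exp (ThetaSigma σ (lamR1 σ u))‖ ^ p) ≤
          C * Real.exp (-(4 / 3) * p * σ ^ ((3 : ℝ) / 2)) ∧
        IsGreatest ((fun u : ℝ => ‖Complex.exp (ThetaSigma σ (lamR1 σ u))‖) '' Ici 0)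
          (Real.exp (-(4 / 3) * σ ^ ((3 : ℝ) / 2))) := by
  refine ⟨3 * Real.exp (1 / 3), by positivity, fun p hp σ hσ => ?_⟩
  set a := (2 : ℝ) ^ ((1 : ℝ) / 3) * Real.sqrt σ
  have ha : 0 ≤ a := by positivity
  refine ⟨?_, ⟨0, self_mem_Ici, by simp [norm_exp_ThetaSigma_lamR1 hσ]⟩, ?_⟩
  · have hsplit : ∀ u, ‖cexp (ThetaSigma σ (lamR1 σ u))‖ ^ p =
        Real.exp (-(4 / 3) * p * σ ^ ((3 : ℝ) / 2)) *
          Real.exp (-(p * (a * u ^ 2 / 2 + u ^ 3 / 3))) := by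
      intro u
      rw [norm_exp_ThetaSigma_lamR1 hσ, ← Real.exp_mul, ← Real.exp_add]
      congr 1
      ring
    simp_rw [hsplit, integral_const_mul]
    calc _ ≤ Real.exp (-(4 / 3) * p * σ ^ ((3 : ℝ) / 2)) * (Real.exp (1 / 3) / (1 / 3)) := by
          gcongr
          exact setIntegral_exp_neg_mul_le_of_linear_growth (by norm_num) hp
            (fun u hu => cubic_phase_nonneg ha hu.le)
            fun u hu => cubic_phase_ge_linear ha hu.le
      _ = _ := by ring
  · rintro _ ⟨u, hu, rfl⟩
    dsimp only
    rw [norm_exp_ThetaSigma_lamR1 hσ, Real.exp_le_exp]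
    linarith [cubic_phase_nonneg ha hu]
end
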